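/- arXiv:1902.02503 — 8 statements merged into one kernel-verified Lean document; each statement's English description precedes it below -/
import Mathlib

section
/- Let μ = Σ_{j=1}^N ω_j δ_{x_j} and ν = Σ_{i=1}^M ϑ_i δ_{y_i} be discrete probability measures on ℝ. Then μ ≤_c ν if and only if there exist q_{j,i} ≥ 0 satisfying Σ_i q_{j,i} = ω_j for all j, Σ_j q_{j,i} = ϑ_i for all i, and Σ_i q_{j,i}(y_i − x_j) = 0 for all j. -/
/-!
Jensen's inequality, applied to each row of a martingale plan, gives the convex order.
Conversely, plans are the nonnegative solutions `q` of a linear system `A q = (ω, ϑ, 0)`. The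
image of the nonnegative orthant under `A` is closed because the total mass of `q` bounds its
norm, so by Farkas' lemma, if no plan exists, there are dual variables `a, β, c` with
`a j + β i + c j * (y i - x j) ≥ 0` and `∑ a j * ω j + ∑ β i * ϑ i < 0`. The convex function
`t ↦ max_j (c j * (x j - t) - a j)` is then `≥ -a j` at `x j` and `≤ β i` at `y i`, which
contradicts the convex order.
-/

open Finset

theorem ConvexOn.finset_sup' {𝕜 E β ι : Type*} [Semiring 𝕜] [PartialOrder 𝕜] [AddCommMonoid E]
    [LinearOrder β] [AddCommMonoid β] [IsOrderedAddMonoid β] [SMul 𝕜 E] [Module 𝕜 β]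
    [PosSMulStrictMono 𝕜 β] {t : Set E} {s : Finset ι} (hs : s.Nonempty) {f : ι → E → β}
    (hf : ∀ i ∈ s, ConvexOn 𝕜 t (f i)) : ConvexOn 𝕜 t fun x ↦ s.sup' hs (f · x) := by
  simpa only [← Finset.sup'_apply] using s.sup'_induction hs f (fun _ h₁ _ h₂ ↦ h₁.sup h₂) hf

theorem ConvexOn.sum_mul_map_le_of_barycenter {ι E : Type*} [AddCommGroup E] [Module ℝ E]
    {s : Set E} {f : E → ℝ} (hf : ConvexOn ℝ s f) {t : Finset ι} {p : ι → ℝ} {y : ι → E} {x : E}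
    (hp : ∀ i ∈ t, 0 ≤ p i) (hy : ∀ i ∈ t, y i ∈ s)
    (hbar : ∑ i ∈ t, p i • (y i - x) = 0) :
    (∑ i ∈ t, p i) * f x ≤ ∑ i ∈ t, p i * f (y i) := by
  rcases (sum_nonneg hp).eq_or_lt with hzero | hpos
  · have hp0 := (sum_eq_zero_iff_of_nonneg hp).1 hzero.symm
    rw [← hzero, zero_mul, sum_eq_zero fun i hi ↦ by rw [hp0 i hi, zero_mul]]
  · have hx : t.centerMass p y = x := by
      rw [centerMass, inv_smul_eq_iff₀ hpos.ne', sum_smul, ← sub_eq_zero, ← sum_sub_distrib]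
      simpa [smul_sub] using hbar
    have := hf.map_centerMass_le hp hpos hy
    rwa [hx, centerMass, smul_eq_mul, le_inv_mul_iff₀ hpos] at this

theorem IsClosed.image_of_norm_le {E F : Type*} [SeminormedAddCommGroup E] [ProperSpace E]
    [TopologicalSpace F] [T2Space F] {A : E → F} (hA : Continuous A) {ℓ : F → ℝ}
    (hℓ : Continuous ℓ) {s : Set E} (hs : IsClosed s) (hbound : ∀ q ∈ s, ‖q‖ ≤ ℓ (A q)) :
    IsClosed (A '' s) := by
  refine isClosed_of_closure_subset fun b hb ↦ ?_
  set R := ℓ b + 1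
  have hcpt : IsClosed (A '' (s ∩ Metric.closedBall 0 R)) :=
    ((isCompact_closedBall 0 R).inter_left hs |>.image hA).isClosed
  suffices b ∈ closure (A '' (s ∩ Metric.closedBall 0 R)) from
    Set.image_mono Set.inter_subset_left (hcpt.closure_subset this)
  rw [mem_closure_iff_nhds] at hb ⊢
  intro U hU
  have hnear : ℓ ⁻¹' Set.Iio R ∈ nhds b :=
    hℓ.continuousAt.preimage_mem_nhds (Iio_mem_nhds (lt_add_one _))
  obtain ⟨_, ⟨hqU, hqR⟩, q, hq, rfl⟩ := hb _ (Filter.inter_mem hU hnear)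
  exact ⟨A q, hqU, q, ⟨hq, mem_closedBall_zero_iff.2 ((hbound q hq).trans hqR.le)⟩, rfl⟩

theorem exists_nonneg_eq_of_forall_dotProduct_nonneg {E κ : Type*} [Fintype κ]
    [AddCommGroup E] [PartialOrder E] [IsOrderedAddMonoid E] [Module ℝ E] [PosSMulMono ℝ E]
    (A : E →ₗ[ℝ] κ → ℝ) (hA : IsClosed (A '' Set.Ici 0)) {b : κ → ℝ}
    (hb : ∀ w : κ → ℝ, (∀ q, 0 ≤ q → 0 ≤ w ⬝ᵥ A q) → 0 ≤ w ⬝ᵥ b) :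
    ∃ q, 0 ≤ q ∧ A q = b := by
  let C : ProperCone ℝ (κ → ℝ) := ⟨(PointedCone.positive ℝ E).map A, hA⟩
  classical
  by_contra! h
  obtain ⟨φ, hφC, hφb⟩ := C.hyperplane_separation_point (x₀ := b) fun ⟨q, hq, hqb⟩ ↦ h q hq hqb
  set w : κ → ℝ := fun k ↦ φ fun j ↦ if k = j then 1 else 0
  have hφ (v : κ → ℝ) : φ v = w ⬝ᵥ v := by
    simp only [dotProduct, mul_comm (w _)]
    exact (φ : (κ → ℝ) →ₗ[ℝ] ℝ).pi_apply_eq_sum_univ v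
  refine hφb.not_ge ((hφ b).symm ▸ hb w fun q hq ↦ ?_)
  exact hφ (A q) ▸ hφC _ ⟨q, hq, rfl⟩

section MartingaleTransport

variable {ι κ : Type*} [Fintype ι] [Fintype κ]

def ConvexOrder (ω x : ι → ℝ) (ϑ y : κ → ℝ) : Prop :=
  ∀ f : ℝ → ℝ, ConvexOn ℝ Set.univ f → ∑ j, ω j * f (x j) ≤ ∑ i, ϑ i * f (y i)

def IsMartingalePlan (ω x : ι → ℝ) (ϑ y : κ → ℝ) (q : ι → κ → ℝ) : Prop :=
  (∀ j i, 0 ≤ q j i) ∧ (∀ j, ∑ i, q j i = ω j) ∧ (∀ i, ∑ j, q j i = ϑ i) ∧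
    (∀ j, ∑ i, q j i * (y i - x j) = 0)

variable {ω x : ι → ℝ} {ϑ y : κ → ℝ}

theorem IsMartingalePlan.convexOrder {q : ι → κ → ℝ} (hq : IsMartingalePlan ω x ϑ y q) :
    ConvexOrder ω x ϑ y := by
  obtain ⟨hq0, hrow, hcol, hbar⟩ := hq
  intro f hf
  calc ∑ j, ω j * f (x j) = ∑ j, (∑ i, q j i) * f (x j) := by simp only [hrow]
    _ ≤ ∑ j, ∑ i, q j i * f (y i) := sum_le_sum fun j _ ↦
        hf.sum_mul_map_le_of_barycenter (fun i _ ↦ hq0 j i) (fun _ _ ↦ trivial)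
          (by simpa only [smul_eq_mul] using hbar j)
    _ = ∑ i, ϑ i * f (y i) := by rw [sum_comm]; simp only [← sum_mul, hcol]

theorem ConvexOrder.dual_nonneg [Nonempty ι] (h : ConvexOrder ω x ϑ y) (hω : ∀ j, 0 ≤ ω j)
    (hϑ : ∀ i, 0 ≤ ϑ i) {a c : ι → ℝ} {β : κ → ℝ}
    (hd : ∀ j i, 0 ≤ a j + β i + c j * (y i - x j)) :
    0 ≤ ∑ j, a j * ω j + ∑ i, β i * ϑ i := by
  set g : ℝ → ℝ := fun t ↦ univ.sup' univ_nonempty fun j ↦ c j * (x j - t) - a j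
  have hg : ConvexOn ℝ Set.univ g := ConvexOn.finset_sup' _ fun j _ ↦
    ((((-c j) • LinearMap.id : ℝ →ₗ[ℝ] ℝ).convexOn convex_univ).add_const
      (c j * x j - a j)).congr fun t _ ↦ by simp; ring
  have hgx (j : ι) : -a j ≤ g (x j) := le_sup'_of_le _ (mem_univ j) (by simp)
  have hgy (i : κ) : g (y i) ≤ β i := sup'_le _ _ fun j _ ↦ by linarith [hd j i]
  have key : ∑ j, ω j * -a j ≤ ∑ i, ϑ i * β i :=
    (sum_le_sum fun j _ ↦ mul_le_mul_of_nonneg_left (hgx j) (hω j)).trans <|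
      (h g hg).trans (sum_le_sum fun i _ ↦ mul_le_mul_of_nonneg_left (hgy i) (hϑ i))
  simp only [mul_comm (ω _), mul_comm (ϑ _), neg_mul, sum_neg_distrib] at key
  linarith

def martingaleConstraints (x : ι → ℝ) (y : κ → ℝ) : (ι → κ → ℝ) →ₗ[ℝ] (ι ⊕ κ ⊕ ι → ℝ) where
  toFun q := Sum.elim (fun j ↦ ∑ i, q j i) <|
    Sum.elim (fun i ↦ ∑ j, q j i) fun j ↦ ∑ i, q j i * (y i - x j)
  map_add' q r := by ext (j | i | j) <;> simp [sum_add_distrib, add_mul]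
  map_smul' c q := by ext (j | i | j) <;> simp [mul_sum, mul_assoc]

theorem martingaleConstraints_eq_iff {q : ι → κ → ℝ} :
    martingaleConstraints x y q = Sum.elim ω (Sum.elim ϑ 0) ↔
      (∀ j, ∑ i, q j i = ω j) ∧ (∀ i, ∑ j, q j i = ϑ i) ∧
        ∀ j, ∑ i, q j i * (y i - x j) = 0 := by
  simp [funext_iff, Sum.forall, martingaleConstraints]

theorem dotProduct_martingaleConstraints (w : ι ⊕ κ ⊕ ι → ℝ) (q : ι → κ → ℝ) :
    w ⬝ᵥ martingaleConstraints x y q = ∑ j, ∑ i, q j i *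
      (w (.inl j) + w (.inr (.inl i)) + w (.inr (.inr j)) * (y i - x j)) := by
  simp only [dotProduct, Fintype.sum_sum_type, martingaleConstraints, LinearMap.coe_mk,
    AddHom.coe_mk, Sum.elim_inl, Sum.elim_inr, mul_sum, mul_add, sum_add_distrib]
  rw [sum_comm (γ := κ)]
  simp only [mul_comm, mul_assoc, add_assoc]

theorem norm_le_sum_sum_of_nonneg {q : ι → κ → ℝ} (hq : 0 ≤ q) : ‖q‖ ≤ ∑ j, ∑ i, q j i := by
  have hsum : 0 ≤ ∑ j, ∑ i, q j i := sum_nonneg fun j _ ↦ sum_nonneg fun i _ ↦ hq j i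
  refine (pi_norm_le_iff_of_nonneg hsum).2 fun j ↦ (pi_norm_le_iff_of_nonneg hsum).2 fun i ↦ ?_
  rw [Real.norm_of_nonneg (hq j i)]
  exact (single_le_sum (fun i _ ↦ hq j i) (mem_univ i)).trans
    (single_le_sum (fun j _ ↦ sum_nonneg fun i _ ↦ hq j i) (mem_univ j))

theorem isClosed_image_martingaleConstraints :
    IsClosed (martingaleConstraints x y '' Set.Ici 0) :=
  isClosed_Ici.image_of_norm_le (LinearMap.continuous_of_finiteDimensional _)
    (ℓ := fun v ↦ ∑ j, v (.inl j)) (by fun_prop) fun _ ↦ norm_le_sum_sum_of_nonneg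

theorem ConvexOrder.exists_isMartingalePlan [Nonempty ι] (h : ConvexOrder ω x ϑ y)
    (hω : ∀ j, 0 ≤ ω j) (hϑ : ∀ i, 0 ≤ ϑ i) : ∃ q, IsMartingalePlan ω x ϑ y q := by
  classical
  obtain ⟨q, hq0, hq⟩ := exists_nonneg_eq_of_forall_dotProduct_nonneg (martingaleConstraints x y)
    isClosed_image_martingaleConstraints (b := Sum.elim ω (Sum.elim ϑ 0)) fun w hw ↦ by
      have hd (j : ι) (i : κ) :
          0 ≤ w (.inl j) + w (.inr (.inl i)) + w (.inr (.inr j)) * (y i - x j) := by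
        simpa [dotProduct_martingaleConstraints, Pi.single_apply, ite_apply] using
          hw (Pi.single j (Pi.single i 1)) (Pi.single_nonneg.2 (Pi.single_nonneg.2 zero_le_one))
      simpa [dotProduct, Fintype.sum_sum_type] using h.dual_nonneg hω hϑ hd
  exact ⟨q, hq0, martingaleConstraints_eq_iff.1 hq⟩

end MartingaleTransport

theorem stmt2_general (N M : ℕ) (x : Fin N → ℝ) (y : Fin M → ℝ) (ω : Fin N → ℝ) (ϑ : Fin M → ℝ)
    (hω : ∀ j, 0 ≤ ω j) (hϑ : ∀ i, 0 ≤ ϑ i)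
    (hω1 : ∑ j, ω j = 1) :
    (∀ f : ℝ → ℝ, ConvexOn ℝ Set.univ f →
        ∑ j, ω j * f (x j) ≤ ∑ i, ϑ i * f (y i)) ↔
    (∃ q : Fin N → Fin M → ℝ, (∀ j i, 0 ≤ q j i) ∧
        (∀ j, ∑ i, q j i = ω j) ∧ (∀ i, ∑ j, q j i = ϑ i) ∧
        (∀ j, ∑ i, q j i * (y i - x j) = 0)) := by
  obtain ⟨j, -, -⟩ := exists_ne_zero_of_sum_ne_zero (hω1 ▸ one_ne_zero : ∑ j, ω j ≠ 0)
  have : Nonempty (Fin N) := ⟨j⟩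
  exact ⟨fun h ↦ ConvexOrder.exists_isMartingalePlan h hω hϑ,
    fun ⟨_, hq⟩ ↦ IsMartingalePlan.convexOrder hq⟩

/-- Strassen's theorem in the discrete two-marginal case: for discrete probability measures
`μ = Σ ω_j δ_{x_j}` and `ν = Σ ϑ_i δ_{y_i}`, convex order `μ ≤_c ν` holds iff the discrete
martingale transport problem is feasible. -/
theorem stmt2 (N M : ℕ) (x : Fin N → ℝ) (y : Fin M → ℝ) (ω : Fin N → ℝ) (ϑ : Fin M → ℝ)
    (hω : ∀ j, 0 ≤ ω j) (hϑ : ∀ i, 0 ≤ ϑ i)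
    (hω1 : ∑ j, ω j = 1) (hϑ1 : ∑ i, ϑ i = 1) :
    (∀ f : ℝ → ℝ, ConvexOn ℝ Set.univ f →
        ∑ j, ω j * f (x j) ≤ ∑ i, ϑ i * f (y i)) ↔
    (∃ q : Fin N → Fin M → ℝ, (∀ j i, 0 ≤ q j i) ∧
        (∀ j, ∑ i, q j i = ω j) ∧ (∀ i, ∑ j, q j i = ϑ i) ∧
        (∀ j, ∑ i, q j i * (y i - x j) = 0)) :=
  stmt2_general N M x y ω ϑ hω hϑ hω1
end

section
/- Suppose c: ℝ² → ℝ satisfies: for all x < x' in supp(μ) and y⁻ < y' < y⁺ in supp(ν), with λ = (y' − y⁻)/(y⁺ − y⁻), one has λ[c(x',y⁺) − c(x,y⁺)] + (1−λ)[c(x',y⁻) − c(x,y⁻)] − [c(x',y') − c(x,y')] > 0. Then any optimizer q* of the discrete martingale transport maximization problem is left-monotone. -/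
/-!
If an optimizer `q` charged `(x, y⁻)`, `(x, y⁺)` and `(x', y')` with `x < x'` and
`y' = (1 - λ) y⁻ + λ y⁺`, one could move mass `ε (1 - λ)` and `ε λ` from `(x, y⁻)` and `(x, y⁺)`
to `(x, y')`, and mass `ε` from `(x', y')` back to `(x', y⁻)` and `(x', y⁺)` in the same
proportions. This rank-one perturbation `ε (δ_x - δ_x') ⊗ (δ_y' - (1 - λ) δ_y⁻ - λ δ_y⁺)` keeps
both marginals, and it keeps the barycenter of every row because `y'` is the `λ`-barycenter of
`y⁻` and `y⁺`. It changes the payoff by `ε` times the Spence–Mirrlees expression, which is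
positive, contradicting optimality.
-/

open Finset Matrix

namespace MartingaleTransport

variable {α β : Type*}

section RankOnePerturbation

variable [Fintype α] [Fintype β]

def IsMartingaleCoupling (x : α → ℝ) (y : β → ℝ) (ω : α → ℝ) (ϑ : β → ℝ) (q : α → β → ℝ) :
    Prop :=
  (∀ j i, 0 ≤ q j i) ∧ (∀ j, ∑ i, q j i = ω j) ∧ (∀ i, ∑ j, q j i = ϑ i) ∧
    (∀ j, ∑ i, q j i * (y i - x j) = 0)

def payoff (c : ℝ → ℝ → ℝ) (x : α → ℝ) (y : β → ℝ) (q : α → β → ℝ) : ℝ :=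
  ∑ j, ∑ i, q j i * c (x j) (y i)

variable {x : α → ℝ} {y : β → ℝ} {ω : α → ℝ} {ϑ : β → ℝ} {q : α → β → ℝ}
  {e : α → ℝ} {f : β → ℝ} (ε : ℝ)

lemma isMartingaleCoupling_add_rankOne (hq : IsMartingaleCoupling x y ω ϑ q)
    (he : ∑ a, e a = 0) (hf : ∑ b, f b = 0) (hfy : ∑ b, f b * y b = 0)
    (hnonneg : ∀ a b, 0 ≤ q a b + ε * (e a * f b)) :
    IsMartingaleCoupling x y ω ϑ (fun a b => q a b + ε * (e a * f b)) := by
  obtain ⟨-, hrow, hcol, hmart⟩ := hq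
  refine ⟨hnonneg, fun a => ?_, fun b => ?_, fun a => ?_⟩
  · rw [sum_add_distrib, hrow, ← mul_sum, ← mul_sum, hf]; ring
  · rw [sum_add_distrib, hcol]
    simp_rw [mul_comm (e _) (f b), ← mul_assoc, ← mul_sum, he]; ring
  · have hfyx : ∑ b, f b * (y b - x a) = 0 := by
      simp_rw [mul_sub, sum_sub_distrib, ← sum_mul, hfy, hf]; ring
    simp_rw [add_mul, sum_add_distrib, hmart, mul_assoc, ← mul_sum, hfyx]; ring

lemma payoff_add_rankOne (c : ℝ → ℝ → ℝ) (x : α → ℝ) (y : β → ℝ) (q : α → β → ℝ) :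
    payoff c x y (fun a b => q a b + ε * (e a * f b)) =
      payoff c x y q + ε * ∑ a, e a * ∑ b, f b * c (x a) (y b) := by
  simp_rw [payoff, add_mul, sum_add_distrib, mul_sum, mul_assoc]

end RankOnePerturbation

section Swap

variable [DecidableEq α] [DecidableEq β]

def shiftDirection (j j' : α) : α → ℝ := Pi.single j 1 - Pi.single j' 1

def spreadDirection (im i' ip : β) (t : ℝ) : β → ℝ :=
  Pi.single i' 1 - Pi.single im (1 - t) - Pi.single ip t

lemma sum_shiftDirection_mul [Fintype α] (j j' : α) (g : α → ℝ) :
    ∑ a, shiftDirection j j' a * g a = g j - g j' := by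
  change shiftDirection j j' ⬝ᵥ g = _
  simp [shiftDirection, sub_dotProduct, single_dotProduct]

lemma sum_spreadDirection_mul [Fintype β] (im i' ip : β) (t : ℝ) (g : β → ℝ) :
    ∑ b, spreadDirection im i' ip t b * g b = g i' - (1 - t) * g im - t * g ip := by
  change spreadDirection im i' ip t ⬝ᵥ g = _
  simp [spreadDirection, sub_dotProduct, single_dotProduct]

lemma add_shiftDirection_mul_spreadDirection_nonneg {q : α → β → ℝ} (hq : ∀ a b, 0 ≤ q a b)
    {j j' : α} {im i' ip : β} {t ε : ℝ} (ht0 : 0 ≤ t) (ht1 : t ≤ 1) (hε : 0 ≤ ε)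
    (hεm : ε ≤ q j im) (hεp : ε ≤ q j ip) (hε' : ε ≤ q j' i') (a : α) (b : β) :
    0 ≤ q a b + ε * (shiftDirection j j' a * spreadDirection im i' ip t b) := by
  have := hq a b
  simp only [shiftDirection, spreadDirection, Pi.sub_apply, Pi.single_apply]
  split_ifs <;> subst_vars <;> nlinarith

variable [Fintype α] [Fintype β]

theorem exists_isMartingaleCoupling_payoff_lt {c : ℝ → ℝ → ℝ} {x : α → ℝ} {y : β → ℝ}
    {ω : α → ℝ} {ϑ : β → ℝ} {q : α → β → ℝ} (hq : IsMartingaleCoupling x y ω ϑ q)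
    {j j' : α} {im i' ip : β} {t : ℝ} (ht0 : 0 ≤ t) (ht1 : t ≤ 1)
    (hbary : (1 - t) * y im + t * y ip = y i')
    (hqm : 0 < q j im) (hqp : 0 < q j ip) (hq' : 0 < q j' i')
    (hgain : 0 < t * (c (x j') (y ip) - c (x j) (y ip))
      + (1 - t) * (c (x j') (y im) - c (x j) (y im)) - (c (x j') (y i') - c (x j) (y i'))) :
    ∃ Q, IsMartingaleCoupling x y ω ϑ Q ∧ payoff c x y q < payoff c x y Q := by
  set ε := min (q j im) (min (q j ip) (q j' i'))
  have hε : 0 < ε := lt_min hqm (lt_min hqp hq')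
  have he : ∑ a, shiftDirection j j' a = 0 := by
    simpa using sum_shiftDirection_mul j j' 1
  have hf : ∑ b, spreadDirection im i' ip t b = 0 := by
    simpa using sum_spreadDirection_mul im i' ip t 1
  have hfy : ∑ b, spreadDirection im i' ip t b * y b = 0 := by
    rw [sum_spreadDirection_mul, ← hbary]; ring
  refine ⟨_, isMartingaleCoupling_add_rankOne ε hq he hf hfy
    (add_shiftDirection_mul_spreadDirection_nonneg hq.1 ht0 ht1 hε.le (min_le_left _ _)
      ((min_le_right _ _).trans (min_le_left _ _)) ((min_le_right _ _).trans (min_le_right _ _))),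
    ?_⟩
  simp_rw [payoff_add_rankOne, sum_spreadDirection_mul, sum_shiftDirection_mul]
  nlinarith

end Swap

lemma barycentric_weight {a b' b : ℝ} (hab' : a < b') (hb'b : b' < b) :
    0 ≤ (b' - a) / (b - a) ∧ (b' - a) / (b - a) ≤ 1 ∧
      (1 - (b' - a) / (b - a)) * a + (b' - a) / (b - a) * b = b' := by
  have hba : 0 < b - a := by linarith
  refine ⟨div_nonneg (by linarith) hba.le, (div_le_one hba).2 (by linarith), ?_⟩
  field_simp
  ring

end MartingaleTransport

open MartingaleTransport

theorem stmt5_general (N M : ℕ) (x : Fin N → ℝ) (y : Fin M → ℝ) (ω : Fin N → ℝ) (ϑ : Fin M → ℝ)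
    (c : ℝ → ℝ → ℝ)
    (hSM : ∀ j j' : Fin N, ∀ im i' ip : Fin M, x j < x j' →
      y im < y i' → y i' < y ip →
      0 < (y i' - y im) / (y ip - y im) * (c (x j') (y ip) - c (x j) (y ip))
          + (1 - (y i' - y im) / (y ip - y im)) * (c (x j') (y im) - c (x j) (y im))
          - (c (x j') (y i') - c (x j) (y i')))
    (q : Fin N → Fin M → ℝ)
    (hfeas : (∀ j i, 0 ≤ q j i) ∧ (∀ j, ∑ i, q j i = ω j) ∧ (∀ i, ∑ j, q j i = ϑ i) ∧
      (∀ j, ∑ i, q j i * (y i - x j) = 0))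
    (hopt : ∀ q' : Fin N → Fin M → ℝ,
      ((∀ j i, 0 ≤ q' j i) ∧ (∀ j, ∑ i, q' j i = ω j) ∧ (∀ i, ∑ j, q' j i = ϑ i) ∧
        (∀ j, ∑ i, q' j i * (y i - x j) = 0)) →
      ∑ j, ∑ i, q' j i * c (x j) (y i) ≤ ∑ j, ∑ i, q j i * c (x j) (y i)) :
    ∀ j j' : Fin N, ∀ im i' ip : Fin M, x j < x j' → y im < y i' → y i' < y ip →
      0 < q j im → 0 < q j ip → ¬ 0 < q j' i' := by
  intro j j' im i' ip hx hym hyp hqm hqp hq'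
  obtain ⟨ht0, ht1, hbary⟩ := barycentric_weight hym hyp
  obtain ⟨Q, hQ, hlt⟩ := exists_isMartingaleCoupling_payoff_lt hfeas ht0 ht1 hbary
    hqm hqp hq' (hSM j j' im i' ip hx hym hyp)
  exact (hopt Q hQ).not_gt hlt

/-- If the payoff `c` satisfies the generalized martingale Spence Mirrlees condition on the
supports of `μ` and `ν`, then any optimizer of the discrete martingale transport maximization
problem is left-monotone: no configuration `(x, y⁻), (x, y⁺), (x', y')` with `x < x'` and
`y⁻ < y' < y⁺` is charged. -/
theorem stmt5 (N M : ℕ) (x : Fin N → ℝ) (y : Fin M → ℝ) (ω : Fin N → ℝ) (ϑ : Fin M → ℝ)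
    (c : ℝ → ℝ → ℝ)
    (hω : ∀ j, 0 < ω j) (hϑ : ∀ i, 0 < ϑ i)
    (hω1 : ∑ j, ω j = 1) (hϑ1 : ∑ i, ϑ i = 1)
    (hSM : ∀ j j' : Fin N, ∀ im i' ip : Fin M, x j < x j' →
      y im < y i' → y i' < y ip →
      0 < (y i' - y im) / (y ip - y im) * (c (x j') (y ip) - c (x j) (y ip))
          + (1 - (y i' - y im) / (y ip - y im)) * (c (x j') (y im) - c (x j) (y im))
          - (c (x j') (y i') - c (x j) (y i')))
    (q : Fin N → Fin M → ℝ)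
    (hfeas : (∀ j i, 0 ≤ q j i) ∧ (∀ j, ∑ i, q j i = ω j) ∧ (∀ i, ∑ j, q j i = ϑ i) ∧
      (∀ j, ∑ i, q j i * (y i - x j) = 0))
    (hopt : ∀ q' : Fin N → Fin M → ℝ,
      ((∀ j i, 0 ≤ q' j i) ∧ (∀ j, ∑ i, q' j i = ω j) ∧ (∀ i, ∑ j, q' j i = ϑ i) ∧
        (∀ j, ∑ i, q' j i * (y i - x j) = 0)) →
      ∑ j, ∑ i, q' j i * c (x j) (y i) ≤ ∑ j, ∑ i, q j i * c (x j) (y i)) :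
    ∀ j j' : Fin N, ∀ im i' ip : Fin M, x j < x j' → y im < y i' → y i' < y ip →
      0 < q j im → 0 < q j ip → ¬ 0 < q j' i' :=
  stmt5_general N M x y ω ϑ c hSM q hfeas hopt
end

section
/- If c: ℝ² → ℝ is smooth with c_xyy > 0 everywhere, then for all x < x' and y⁻ < y' < y⁺, setting λ = (y'−y⁻)/(y⁺−y⁻), one has λ[c(x',y⁺) − c(x,y⁺)] + (1−λ)[c(x',y⁻) − c(x,y⁻)] − [c(x',y') − c(x,y')] > 0. -/
private lemma slice_smooth {c : ℝ → ℝ → ℝ}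
    (hsmooth : ContDiff ℝ (⊤ : ℕ∞) (Function.uncurry c)) (x : ℝ) :
    ContDiff ℝ (⊤ : ℕ∞) (c x) := by
  have : (c x) = (Function.uncurry c) ∘ (fun v => (x, v)) := rfl
  rw [this]
  exact hsmooth.comp (contDiff_const.prodMk contDiff_id)

/-- If `c` is smooth with `c_xyy > 0` everywhere (martingale Spence Mirrlees condition),
then the generalized (integrated) Spence Mirrlees inequality holds for all
`x < x'` and `y⁻ < y' < y⁺`. -/
theorem stmt7 (c : ℝ → ℝ → ℝ)
    (hsmooth : ContDiff ℝ (⊤ : ℕ∞) (Function.uncurry c))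
    (hpos : ∀ t v : ℝ, 0 < deriv (fun a => deriv (deriv (c a)) v) t) :
    ∀ x x' ym y' yp : ℝ, x < x' → ym < y' → y' < yp →
      0 < (y' - ym) / (yp - ym) * (c x' yp - c x yp)
          + (1 - (y' - ym) / (yp - ym)) * (c x' ym - c x ym)
          - (c x' y' - c x y') := by
  intro x x' ym y' yp hx hy1 hy2
  set lam := (y' - ym) / (yp - ym) with hlam
  have hden : (0:ℝ) < yp - ym := by linarith
  have hlam0 : 0 < lam := div_pos (by linarith) hden
  have hlam1 : lam < 1 := (div_lt_one hden).mpr (by linarith)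
  -- D v = c x' v - c x v is strictly convex
  set D : ℝ → ℝ := fun v => c x' v - c x v with hD
  have hsx : ∀ a : ℝ, ContDiff ℝ (⊤ : ℕ∞) (c a) := fun a => slice_smooth hsmooth a
  have hd1 : ∀ a : ℝ, Differentiable ℝ (c a) := fun a => (hsx a).differentiable (by simp)
  have hd2 : ∀ a : ℝ, Differentiable ℝ (deriv (c a)) := fun a =>
    ((contDiff_infty_iff_deriv.mp ((hsx a).of_le (by simp))).2).differentiable (by simp)
  have hderivD : deriv D = fun v => deriv (c x') v - deriv (c x) v := by
    funext v
    exact deriv_sub ((hd1 x') v) ((hd1 x) v)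
  have hderiv2D : ∀ v, deriv (deriv D) v = deriv (deriv (c x')) v - deriv (deriv (c x)) v := by
    intro v
    rw [hderivD]
    exact deriv_sub ((hd2 x') v) ((hd2 x) v)
  have hpos2 : ∀ v, 0 < deriv^[2] D v := by
    intro v
    have mono : StrictMono (fun a => deriv (deriv (c a)) v) :=
      strictMono_of_deriv_pos (fun t => hpos t v)
    have := mono hx
    simp only [Function.iterate_succ, Function.iterate_zero, Function.comp,
      Function.comp_apply, id_eq]
    rw [hderiv2D v]
    simpa using sub_pos.mpr this
  have hconv : StrictConvexOn ℝ Set.univ D := by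
    apply strictConvexOn_of_deriv2_pos convex_univ
    · exact (((hd1 x').sub (hd1 x)).continuous).continuousOn
    · intro v _
      exact hpos2 v
  have hy' : lam • yp + (1 - lam) • ym = y' := by
    field_simp [hlam]
    have hm : lam * (yp - ym) = y' - ym := by rw [hlam]; exact div_mul_cancel₀ _ hden.ne'
    linear_combination hm
  have key := hconv.2 (Set.mem_univ yp) (Set.mem_univ ym) (by linarith : yp ≠ ym)
    hlam0 (by linarith : (0:ℝ) < 1 - lam) (by ring)
  rw [hy'] at key
  simp only [smul_eq_mul, hD] at key
  linarith
end

section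
/- Let ℚ be a left-monotone martingale transport plan between discrete μ and ν, let x₁ = min supp(μ), and suppose x₁ = y_ℓ ∈ supp(ν). Then ℚ({(x₁, y_ℓ)}) > 0, i.e., (x₁, y_ℓ) is an atom of ℚ. -/
open Finset

/-- If `ℚ` is a left-monotone martingale transport plan between discrete `μ` and `ν`, the
smallest atom `x₁` of `μ` coincides with an atom `y_ℓ` of `ν`, then `(x₁, y_ℓ)` is an atom
of `ℚ`. -/
theorem stmt10 (N M : ℕ) (x : Fin (N + 1) → ℝ) (y : Fin M → ℝ)
    (ω : Fin (N + 1) → ℝ) (ϑ : Fin M → ℝ)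
    (hx : StrictMono x) (hy : StrictMono y)
    (hω : ∀ j, 0 < ω j) (hϑ : ∀ i, 0 < ϑ i)
    (hω1 : ∑ j, ω j = 1) (hϑ1 : ∑ i, ϑ i = 1)
    (q : Fin (N + 1) → Fin M → ℝ)
    (hfeas : (∀ j i, 0 ≤ q j i) ∧ (∀ j, ∑ i, q j i = ω j) ∧ (∀ i, ∑ j, q j i = ϑ i) ∧
      (∀ j, ∑ i, q j i * (y i - x j) = 0))
    (hlm : ∀ j j' : Fin (N + 1), ∀ im i' ip : Fin M, x j < x j' → y im < y i' → y i' < y ip →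
      0 < q j im → 0 < q j ip → ¬ 0 < q j' i')
    (ℓ : Fin M) (hxy : x 0 = y ℓ) :
    0 < q 0 ℓ := by
  obtain ⟨hpos, hrow, hcol, hmart⟩ := hfeas
  by_contra h
  push_neg at h
  have hq0ℓ : q 0 ℓ = 0 := le_antisymm h (hpos 0 ℓ)
  -- some mass in row 0
  have hexist : ∃ i, 0 < q 0 i := by
    by_contra hc
    push_neg at hc
    have : ∑ i, q 0 i = 0 :=
      Finset.sum_eq_zero fun i _ => le_antisymm (hc i) (hpos 0 i)
    rw [hrow 0] at this
    exact absurd this (ne_of_gt (hω 0))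
  -- mass strictly left of y ℓ
  have him : ∃ im, 0 < q 0 im ∧ y im < y ℓ := by
    by_contra hc
    push_neg at hc
    have hsum : 0 < ∑ i, q 0 i * (y i - x 0) := by
      apply Finset.sum_pos'
      · intro i _
        rcases eq_or_lt_of_le (hpos 0 i) with hq | hq
        · simp [← hq]
        · have hge : y ℓ ≤ y i := hc i hq
          have : 0 ≤ y i - x 0 := by rw [hxy]; linarith
          exact mul_nonneg (hpos 0 i) this
      · obtain ⟨i, hi⟩ := hexist
        refine ⟨i, Finset.mem_univ i, ?_⟩
        have hne : i ≠ ℓ := fun he => by rw [he] at hi; exact absurd hq0ℓ (ne_of_gt hi)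
        have hge : y ℓ ≤ y i := hc i hi
        have hlt : y ℓ < y i := lt_of_le_of_ne hge (fun he => hne (hy.injective he.symm))
        have : 0 < y i - x 0 := by rw [hxy]; linarith
        exact mul_pos hi this
    rw [hmart 0] at hsum
    exact lt_irrefl 0 hsum
  -- mass strictly right of y ℓ
  have hip : ∃ ip, 0 < q 0 ip ∧ y ℓ < y ip := by
    by_contra hc
    push_neg at hc
    have hsum : 0 < ∑ i, q 0 i * (x 0 - y i) := by
      apply Finset.sum_pos'
      · intro i _
        rcases eq_or_lt_of_le (hpos 0 i) with hq | hq
        · simp [← hq]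
        · have hge : y i ≤ y ℓ := hc i hq
          have : 0 ≤ x 0 - y i := by rw [hxy]; linarith
          exact mul_nonneg (hpos 0 i) this
      · obtain ⟨i, hi⟩ := hexist
        refine ⟨i, Finset.mem_univ i, ?_⟩
        have hne : i ≠ ℓ := fun he => by rw [he] at hi; exact absurd hq0ℓ (ne_of_gt hi)
        have hge : y i ≤ y ℓ := hc i hi
        have hlt : y i < y ℓ := lt_of_le_of_ne hge (fun he => hne (hy.injective he))
        have : 0 < x 0 - y i := by rw [hxy]; linarith
        exact mul_pos hi this
    have heq : ∑ i, q 0 i * (x 0 - y i) = -∑ i, q 0 i * (y i - x 0) := by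
      rw [← Finset.sum_neg_distrib]
      exact Finset.sum_congr rfl fun i _ => by ring
    rw [heq, hmart 0, neg_zero] at hsum
    exact lt_irrefl 0 hsum
  obtain ⟨im, him1, him2⟩ := him
  obtain ⟨ip, hip1, hip2⟩ := hip
  -- some row j with mass at column ℓ
  have hj : ∃ j, 0 < q j ℓ := by
    by_contra hc
    push_neg at hc
    have : ∑ j, q j ℓ = 0 :=
      Finset.sum_eq_zero fun j _ => le_antisymm (hc j) (hpos j ℓ)
    rw [hcol ℓ] at this
    exact absurd this (ne_of_gt (hϑ ℓ))
  obtain ⟨j, hjpos⟩ := hj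
  have hjne : j ≠ 0 := fun he => by rw [he] at hjpos; exact absurd hq0ℓ (ne_of_gt hjpos)
  have hxlt : x 0 < x j := hx (Fin.pos_of_ne_zero hjne)
  exact hlm 0 j im ℓ ip hxlt him2 hip2 him1 hip1 hjpos
end

section
/- Let μ, ν be finitely supported probability measures with μ ≤_c ν, with smallest atoms x₁ = min supp(μ) and y₁ = min supp(ν). If x₁ = y₁, then μ({x₁}) ≤ ν({y₁}). -/
open Finset

/-- If `μ ≤_c ν` are finitely supported probability measures whose smallest atoms coincide,
`x₁ = y₁`, then `μ({x₁}) ≤ ν({y₁})`. -/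
theorem stmt11 (N M : ℕ) (x : Fin (N + 1) → ℝ) (y : Fin (M + 1) → ℝ)
    (ω : Fin (N + 1) → ℝ) (ϑ : Fin (M + 1) → ℝ)
    (hx : StrictMono x) (hy : StrictMono y)
    (hω : ∀ j, 0 < ω j) (hϑ : ∀ i, 0 < ϑ i)
    (hω1 : ∑ j, ω j = 1) (hϑ1 : ∑ i, ϑ i = 1)
    (hcx : ∀ f : ℝ → ℝ, ConvexOn ℝ Set.univ f →
        ∑ j, ω j * f (x j) ≤ ∑ i, ϑ i * f (y i))
    (hxy : x 0 = y 0) :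
    ω 0 ≤ ϑ 0 := by
  match M, y, ϑ, hy, hϑ, hϑ1, hcx, hxy with
  | 0, y, ϑ, hy, hϑ, hϑ1, hcx, hxy =>
    have h1 : ϑ 0 = 1 := by simpa using hϑ1
    have h2 : ω 0 ≤ 1 := by
      rw [← hω1]
      exact Finset.single_le_sum (fun j _ => (hω j).le) (Finset.mem_univ 0)
    rw [h1]; exact h2
  | (m + 1), y, ϑ, hy, hϑ, hϑ1, hcx, hxy =>
    set a : ℝ := (y 0 + y 1) / 2 with ha
    have hy01 : y 0 < y 1 := hy (show (0 : Fin (m + 2)) < 1 by norm_num)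
    have ha0 : y 0 < a := by rw [ha]; linarith
    have ha1 : a < y 1 := by rw [ha]; linarith
    set f : ℝ → ℝ := fun t => max (a - t) 0 with hf
    have hconv : ConvexOn ℝ Set.univ f := by
      have h1 : ConvexOn ℝ (Set.univ : Set ℝ) (fun t => a - t) :=
        (convexOn_const a convex_univ).sub (concaveOn_id convex_univ)
      exact h1.sup (convexOn_const 0 convex_univ)
    have key := hcx f hconv
    have hRHS : ∑ i, ϑ i * f (y i) = ϑ 0 * (a - y 0) := by
      rw [Fin.sum_univ_succ]
      have h0 : f (y 0) = a - y 0 := by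
        simp [hf, max_eq_left (by linarith : (0:ℝ) ≤ a - y 0)]
      have hz : ∀ i : Fin (m + 1), ϑ i.succ * f (y i.succ) = 0 := by
        intro i
        have : y 1 ≤ y i.succ := hy.monotone (by simpa using Fin.succ_le_succ_iff.mpr (Fin.zero_le i) : (1 : Fin (m + 2)) ≤ i.succ)
        have : f (y i.succ) = 0 := by
          simp [hf, max_eq_right (by linarith : a - y i.succ ≤ 0)]
        rw [this, mul_zero]
      rw [Finset.sum_congr rfl (fun i _ => hz i), h0]
      simp
    have hLHS : ω 0 * (a - x 0) ≤ ∑ j, ω j * f (x j) := by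
      have h0 : f (x 0) = a - x 0 := by
        rw [hxy]
        simp [hf, max_eq_left (by linarith : (0:ℝ) ≤ a - y 0)]
      calc ω 0 * (a - x 0) = ω 0 * f (x 0) := by rw [h0]
        _ ≤ ∑ j, ω j * f (x j) :=
          Finset.single_le_sum (f := fun j => ω j * f (x j))
            (fun j _ => mul_nonneg (hω j).le (le_max_right _ _)) (Finset.mem_univ 0)
    rw [hRHS] at key
    have hfin : ω 0 * (a - y 0) ≤ ϑ 0 * (a - y 0) := by
      rw [hxy] at hLHS; exact le_trans hLHS key
    exact le_of_mul_le_mul_right (by linarith [hfin]) (by linarith : (0:ℝ) < a - y 0)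
end

section
/- Let ℚ be a left-monotone martingale transport plan between finitely supported μ and ν, and suppose the smallest atom x₁ of μ satisfies y_ℓ < x₁ < y_{ℓ+1} for consecutive atoms y_ℓ, y_{ℓ+1} of ν. Then both (x₁, y_ℓ) and (x₁, y_{ℓ+1}) are atoms of ℚ. -/
open Finset

/-- If `ℚ` is a left-monotone martingale transport plan between finitely supported `μ` and
`ν` and the smallest atom `x₁` of `μ` satisfies `y_ℓ < x₁ < y_{ℓ+1}` for consecutive atoms
of `ν`, then both `(x₁, y_ℓ)` and `(x₁, y_{ℓ+1})` are atoms of `ℚ`. -/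
theorem stmt12 (N M : ℕ) (x : Fin (N + 1) → ℝ) (y : Fin M → ℝ)
    (ω : Fin (N + 1) → ℝ) (ϑ : Fin M → ℝ)
    (hx : StrictMono x) (hy : StrictMono y)
    (hω : ∀ j, 0 < ω j) (hϑ : ∀ i, 0 < ϑ i)
    (hω1 : ∑ j, ω j = 1) (hϑ1 : ∑ i, ϑ i = 1)
    (q : Fin (N + 1) → Fin M → ℝ)
    (hfeas : (∀ j i, 0 ≤ q j i) ∧ (∀ j, ∑ i, q j i = ω j) ∧ (∀ i, ∑ j, q j i = ϑ i) ∧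
      (∀ j, ∑ i, q j i * (y i - x j) = 0))
    (hlm : ∀ j j' : Fin (N + 1), ∀ im i' ip : Fin M, x j < x j' → y im < y i' → y i' < y ip →
      0 < q j im → 0 < q j ip → ¬ 0 < q j' i')
    (ℓ : ℕ) (h1 : ℓ < M) (h2 : ℓ + 1 < M)
    (hlow : y ⟨ℓ, h1⟩ < x 0) (hhigh : x 0 < y ⟨ℓ + 1, h2⟩) :
    0 < q 0 ⟨ℓ, h1⟩ ∧ 0 < q 0 ⟨ℓ + 1, h2⟩ := by
  obtain ⟨hq, hrow, hcol, hmart⟩ := hfeas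
  -- every atom of ν is strictly below or strictly above x 0
  have hsign : ∀ i : Fin M, y i < x 0 ∨ x 0 < y i := by
    intro i
    rcases le_or_gt i.val ℓ with h | h
    · exact Or.inl (lt_of_le_of_lt (hy.monotone (show i ≤ ⟨ℓ, h1⟩ from h)) hlow)
    · exact Or.inr (lt_of_lt_of_le hhigh (hy.monotone (show (⟨ℓ + 1, h2⟩ : Fin M) ≤ i from h)))
  have hexpos : ∃ i, 0 < q 0 i := by
    by_contra h
    push_neg at h
    have h0 : ∑ i, q 0 i = 0 := Finset.sum_eq_zero fun i _ => le_antisymm (h i) (hq 0 i)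
    rw [hrow 0] at h0
    exact (hω 0).ne' h0
  -- mass strictly below x 0
  have hlt : ∃ i, 0 < q 0 i ∧ y i < x 0 := by
    by_contra h
    push_neg at h
    obtain ⟨i0, hi0⟩ := hexpos
    have hpos : 0 < ∑ i, q 0 i * (y i - x 0) := by
      apply Finset.sum_pos'
      · intro i _
        rcases eq_or_lt_of_le (hq 0 i) with he | hp
        · rw [← he]; simp
        · have : x 0 < y i := (hsign i).resolve_left (not_lt.mpr (h i hp))
          exact le_of_lt (mul_pos hp (sub_pos.mpr this))
      · refine ⟨i0, Finset.mem_univ _, ?_⟩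
        have : x 0 < y i0 := (hsign i0).resolve_left (not_lt.mpr (h i0 hi0))
        exact mul_pos hi0 (sub_pos.mpr this)
    rw [hmart 0] at hpos
    exact lt_irrefl 0 hpos
  -- mass strictly above x 0
  have hgt : ∃ i, 0 < q 0 i ∧ x 0 < y i := by
    by_contra h
    push_neg at h
    obtain ⟨i0, hi0⟩ := hexpos
    have hneg : ∑ i, q 0 i * (y i - x 0) < 0 := by
      have := Finset.sum_pos' (f := fun i => q 0 i * (x 0 - y i)) (s := Finset.univ)
        (fun i _ => by
          rcases eq_or_lt_of_le (hq 0 i) with he | hp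
          · simp [← he]
          · have : y i < x 0 := (hsign i).resolve_right (not_lt.mpr (h i hp))
            exact le_of_lt (mul_pos hp (sub_pos.mpr this)))
        ⟨i0, Finset.mem_univ _, by
          have : y i0 < x 0 := (hsign i0).resolve_right (not_lt.mpr (h i0 hi0))
          exact mul_pos hi0 (sub_pos.mpr this)⟩
      have heq : ∑ i, q 0 i * (y i - x 0) = -∑ i, q 0 i * (x 0 - y i) := by
        rw [← Finset.sum_neg_distrib]
        exact Finset.sum_congr rfl fun i _ => by ring
      rw [heq]
      linarith
    rw [hmart 0] at hneg
    exact lt_irrefl 0 hneg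
  -- key step using left-monotonicity and positivity of column sums
  have key : ∀ k : Fin M, (∃ im, 0 < q 0 im ∧ y im < y k) →
      (∃ ip, 0 < q 0 ip ∧ y k < y ip) → 0 < q 0 k := by
    rintro k ⟨im, him, himlt⟩ ⟨ip, hip, hiplt⟩
    have hcolpos : ∃ j, 0 < q j k := by
      by_contra h
      push_neg at h
      have h0 : ∑ j, q j k = 0 := Finset.sum_eq_zero fun j _ => le_antisymm (h j) (hq j k)
      rw [hcol k] at h0
      exact (hϑ k).ne' h0
    obtain ⟨j, hj⟩ := hcolpos
    rcases eq_or_ne j 0 with rfl | hne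
    · exact hj
    · exact absurd hj (hlm 0 j im k ip (hx (Fin.pos_of_ne_zero hne)) himlt hiplt him hip)
  obtain ⟨im, him, himx⟩ := hlt
  obtain ⟨ip, hip, hipx⟩ := hgt
  have him_le : (im : ℕ) ≤ ℓ := by
    by_contra hc
    push_neg at hc
    have : y ⟨ℓ + 1, h2⟩ ≤ y im := hy.monotone (show (⟨ℓ + 1, h2⟩ : Fin M) ≤ im from hc)
    linarith
  have hip_ge : ℓ + 1 ≤ (ip : ℕ) := by
    by_contra hc
    push_neg at hc
    have : y ip ≤ y ⟨ℓ, h1⟩ := hy.monotone (show ip ≤ (⟨ℓ, h1⟩ : Fin M) from Nat.lt_succ_iff.mp hc)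
    linarith
  constructor
  · rcases eq_or_ne im ⟨ℓ, h1⟩ with rfl | hne
    · exact him
    · refine key _ ⟨im, him, ?_⟩ ⟨ip, hip, lt_trans hlow hipx⟩
      exact hy (show im < (⟨ℓ, h1⟩ : Fin M) from
        Fin.lt_def.mpr (lt_of_le_of_ne him_le fun h => hne (Fin.ext h)))
  · rcases eq_or_ne ip ⟨ℓ + 1, h2⟩ with rfl | hne
    · exact hip
    · refine key _ ⟨im, him, lt_trans himx hhigh⟩ ⟨ip, hip, ?_⟩
      exact hy (show (⟨ℓ + 1, h2⟩ : Fin M) < ip from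
        Fin.lt_def.mpr (lt_of_le_of_ne hip_ge fun h => hne (Fin.ext h.symm)))
end

section
/- For finitely supported probability measures μ ≤_c ν on ℝ, there exists exactly one left-monotone martingale transport plan in M₂(μ,ν). -/
/-!
Induction on the number of atoms of `μ`. In a left-monotone martingale coupling the leftmost
atom `ω₀ δ_{x₀}` must be sent to a sub-measure `θ ≤ ν` of mass `ω₀` and barycentre `x₀` that
fills `ν` between any two of its atoms, since an atom of `ν` strictly inside the support of `θ`
cannot receive mass from an atom to the right of `x₀`.

Such a `θ` exists: as a window of mass `ω₀` slides through the quantiles of `ν`, its barycentre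
moves continuously from `≤ x₀` to `≥ x₀`, because the put and call prices of `ω₀ δ_{x₀}` are
dominated by those of `ν`. It is unique: the difference of two of them has zero mass and zero
mean but never changes sign in the pattern `+ - +` or `- + -`. Finally `ν - θ` still dominates
the remaining atoms of `μ` in convex order, because replacing a convex `f` by the maximum of `f`
and its chord over the support of `θ` changes nothing where `ν - θ` lives and makes `f` affine
where `θ` lives.
-/

open Finset

section SignChange

variable {ι : Type*} [Fintype ι] {y d : ι → ℝ}

lemma eq_zero_of_mul_sub_nonpos (hy : Function.Injective y) (hs : ∑ i, d i = 0)
    (hm : ∑ i, d i * y i = 0) (c : ℝ) (hc : ∀ i, d i * (y i - c) ≤ 0) : d = 0 := by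
  have hzero : ∑ i, d i * (y i - c) = 0 := by
    simp only [mul_sub, sum_sub_distrib, ← sum_mul, hs, hm, zero_mul, sub_zero]
  have hterm := (sum_eq_zero_iff_of_nonpos fun i _ => hc i).1 hzero
  funext i
  by_contra hi
  have hyi : y i = c := sub_eq_zero.1 ((mul_eq_zero.1 (hterm i (mem_univ i))).resolve_left hi)
  have hsingle : ∑ k, d k = d i := by
    refine sum_eq_single i (fun k _ hk => ?_) (by simp)
    rcases mul_eq_zero.1 (hterm k (mem_univ k)) with h | h
    · exact h
    · exact absurd (hy ((sub_eq_zero.1 h).trans hyi.symm)) hk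
  exact hi (hsingle ▸ hs)

variable [LinearOrder ι]

lemma eq_zero_of_pos_lt_neg (hy : StrictMono y) (hs : ∑ i, d i = 0)
    (hm : ∑ i, d i * y i = 0) (hsep : ∀ i k, 0 < d i → d k < 0 → i < k) : d = 0 := by
  by_cases hneg : ∃ k, d k < 0
  · obtain ⟨k₀, hk₀⟩ := hneg
    obtain ⟨k, hk, hmin⟩ := (univ.filter fun k => d k < 0).exists_min_image id
      ⟨k₀, by simpa using hk₀⟩
    simp only [mem_filter, mem_univ, true_and, id] at hk hmin
    refine eq_zero_of_mul_sub_nonpos hy.injective hs hm (y k) fun i => ?_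
    rcases lt_trichotomy i k with h | rfl | h
    · exact mul_nonpos_of_nonneg_of_nonpos (not_lt.1 fun hi => (hmin i hi).not_gt h)
        (sub_nonpos.2 (hy h).le)
    · simp
    · exact mul_nonpos_of_nonpos_of_nonneg (not_lt.1 fun hi => (hsep i k hi hk).not_gt h)
        (sub_nonneg.2 (hy h).le)
  · push Not at hneg
    funext i
    exact (sum_eq_zero_iff_of_nonneg fun i _ => hneg i).1 hs i (mem_univ i)

lemma eq_zero_of_no_sign_alternation (hy : StrictMono y) (hs : ∑ i, d i = 0)
    (hm : ∑ i, d i * y i = 0)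
    (hpos : ∀ i k l, i < k → k < l → 0 < d i → 0 < d l → 0 ≤ d k)
    (hneg : ∀ i k l, i < k → k < l → d i < 0 → d l < 0 → d k ≤ 0) : d = 0 := by
  by_cases hsep : ∀ i k, 0 < d i → d k < 0 → i < k
  · exact eq_zero_of_pos_lt_neg hy hs hm hsep
  push Not at hsep
  obtain ⟨i, k, hi, hk, hki⟩ := hsep
  have hki : k < i := lt_of_le_of_ne hki (by rintro rfl; linarith)
  suffices -d = 0 from neg_eq_zero.1 this
  refine eq_zero_of_pos_lt_neg hy (by simp [hs]) (by simp [hm]) fun i' k' hi' hk' => ?_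
  simp only [Pi.neg_apply, neg_pos, neg_lt_zero] at hi' hk'
  by_contra! hk'i'
  have hk'i' : k' < i' := lt_of_le_of_ne hk'i' (by rintro rfl; linarith)
  rcases lt_trichotomy k k' with h | rfl | h
  · linarith [hneg k k' i' h hk'i' hk hi']
  · linarith
  · linarith [hpos k' k i h hki hk' hi]

end SignChange

lemma convexOn_affine (c s : ℝ) : ConvexOn ℝ Set.univ (fun t => c + s * t) :=
  ⟨convex_univ, fun _ _ _ _ a b _ _ hab =>
    le_of_eq (by simp only [smul_eq_mul]; linear_combination (-c) * hab)⟩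

lemma convexOn_max_const_sub (K : ℝ) : ConvexOn ℝ Set.univ (fun t => max (K - t) 0) :=
  ((convexOn_affine K (-1)).sup (convexOn_const 0 convex_univ)).congr fun t _ => by
    simp only [Pi.sup_apply]; ring_nf

lemma convexOn_max_sub_const (K : ℝ) : ConvexOn ℝ Set.univ (fun t => max (t - K) 0) :=
  ((convexOn_affine (-K) 1).sup (convexOn_const 0 convex_univ)).congr fun t _ => by
    simp only [Pi.sup_apply]; ring_nf

lemma exists_support_bounds {ι : Type*} [Fintype ι] [LinearOrder ι] {θ : ι → ℝ}
    (hθ : ∀ i, 0 ≤ θ i) (hpos : 0 < ∑ i, θ i) :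
    ∃ a b, 0 < θ a ∧ 0 < θ b ∧ ∀ i, 0 < θ i → a ≤ i ∧ i ≤ b := by
  obtain ⟨i, -, hi⟩ := exists_ne_zero_of_sum_ne_zero hpos.ne'
  have hne : (univ.filter fun i => 0 < θ i).Nonempty := ⟨i, by simpa using (hθ i).lt_of_ne' hi⟩
  obtain ⟨a, ha, hmin⟩ := (univ.filter fun i => 0 < θ i).exists_min_image id hne
  obtain ⟨b, hb, hmax⟩ := (univ.filter fun i => 0 < θ i).exists_max_image id hne
  simp only [mem_filter, mem_univ, true_and, id] at ha hb hmin hmax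
  exact ⟨a, b, ha, hb, fun i hi => ⟨hmin i hi, hmax i hi⟩⟩

/-- In the finite setting this characterises the shadow of `m δ_{x₀}` in `ϑ`. -/
structure IsShadow {ι : Type*} [Fintype ι] [LinearOrder ι] (y ϑ : ι → ℝ) (m x₀ : ℝ)
    (θ : ι → ℝ) : Prop where
  nonneg : ∀ i, 0 ≤ θ i
  le : ∀ i, θ i ≤ ϑ i
  sum_eq : ∑ i, θ i = m
  sum_mul_eq : ∑ i, θ i * y i = m * x₀
  saturated : ∀ i k l, i < k → k < l → 0 < θ i → 0 < θ l → θ k = ϑ k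

section Chord

variable {f : ℝ → ℝ} {p q t : ℝ}

lemma ConvexOn.chord_le_of_notMem_Ioo (hf : ConvexOn ℝ Set.univ f) (hpq : p < q)
    (ht : t ∉ Set.Ioo p q) : f p + slope f p q * (t - p) ≤ f t := by
  rcases eq_or_ne t p with rfl | htp
  · simp
  have hft : f t = f p + slope f p t * (t - p) := by
    rw [mul_comm, ← smul_eq_mul, sub_smul_slope, vsub_eq_sub]; ring
  have hmono := hf.slope_mono (Set.mem_univ p)
  rw [hft]
  rcases lt_or_gt_of_ne htp with htp | htp
  · have := hmono ⟨Set.mem_univ t, htp.ne⟩ ⟨Set.mem_univ q, hpq.ne'⟩ (htp.trans hpq).le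
    nlinarith
  · have hqt : q ≤ t := not_lt.1 fun h => ht ⟨htp, h⟩
    have := hmono ⟨Set.mem_univ q, hpq.ne'⟩ ⟨Set.mem_univ t, htp.ne'⟩ hqt
    nlinarith

lemma ConvexOn.le_chord_of_mem_Icc (hf : ConvexOn ℝ Set.univ f) (hpq : p < q)
    (ht : t ∈ Set.Icc p q) : f t ≤ f p + slope f p q * (t - p) := by
  rcases eq_or_lt_of_le ht.1 with rfl | htp
  · simp
  have hft : f t = f p + slope f p t * (t - p) := by
    rw [mul_comm, ← smul_eq_mul, sub_smul_slope, vsub_eq_sub]; ring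
  have := hf.slope_mono (Set.mem_univ p) ⟨Set.mem_univ t, htp.ne'⟩ ⟨Set.mem_univ q, hpq.ne'⟩ ht.2
  rw [hft]
  nlinarith

end Chord

namespace IsShadow

variable {ι : Type*} [Fintype ι] [LinearOrder ι] {y ϑ θ θ' : ι → ℝ} {m x₀ : ℝ}

lemma unique (hy : StrictMono y) (hθ : IsShadow y ϑ m x₀ θ) (hθ' : IsShadow y ϑ m x₀ θ') :
    θ = θ' := by
  have hd := eq_zero_of_no_sign_alternation (d := θ - θ') hy
    (by simp [sum_sub_distrib, hθ.sum_eq, hθ'.sum_eq])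
    (by simp [sub_mul, sum_sub_distrib, hθ.sum_mul_eq, hθ'.sum_mul_eq])
    (fun i k l hik hkl hi hl => by
      simp only [Pi.sub_apply, sub_pos, sub_nonneg] at hi hl ⊢
      rw [hθ.saturated i k l hik hkl ((hθ'.nonneg i).trans_lt hi) ((hθ'.nonneg l).trans_lt hl)]
      exact hθ'.le k)
    (fun i k l hik hkl hi hl => by
      simp only [Pi.sub_apply, sub_neg, sub_nonpos] at hi hl ⊢
      rw [hθ'.saturated i k l hik hkl ((hθ.nonneg i).trans_lt hi) ((hθ.nonneg l).trans_lt hl)]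
      exact hθ.le k)
  exact sub_eq_zero.1 hd

lemma sum_mul_affine (hθ : IsShadow y ϑ m x₀ θ) (c s : ℝ) :
    ∑ i, θ i * (c + s * y i) = m * (c + s * x₀) := by
  have h : ∀ i, θ i * (c + s * y i) = c * θ i + s * (θ i * y i) := fun i => by ring
  simp only [h, sum_add_distrib, ← mul_sum, hθ.sum_eq, hθ.sum_mul_eq]
  ring

lemma mem_Icc_of_support (hθ : IsShadow y ϑ m x₀ θ) (hm : 0 < m) {p q : ℝ}
    (hpq : ∀ i, 0 < θ i → y i ∈ Set.Icc p q) : x₀ ∈ Set.Icc p q := by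
  have hterm : ∀ i, θ i * (y i - p) ≥ 0 ∧ θ i * (q - y i) ≥ 0 := fun i => by
    rcases (hθ.nonneg i).eq_or_lt with h | h
    · simp [← h]
    · exact ⟨mul_nonneg h.le (sub_nonneg.2 (hpq i h).1), mul_nonneg h.le (sub_nonneg.2 (hpq i h).2)⟩
  have h1 := hθ.sum_mul_affine (-p) 1
  have h2 := hθ.sum_mul_affine q (-1)
  have s1 : 0 ≤ ∑ i, θ i * (-p + 1 * y i) := sum_nonneg fun i _ => by linarith [(hterm i).1]
  have s2 : 0 ≤ ∑ i, θ i * (q + -1 * y i) := sum_nonneg fun i _ => by linarith [(hterm i).2]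
  constructor <;> nlinarith

lemma exists_convexOn_majorant (hy : StrictMono y) (hθ : IsShadow y ϑ m x₀ θ) (hm : 0 < m)
    {f : ℝ → ℝ} (hf : ConvexOn ℝ Set.univ f) :
    ∃ g : ℝ → ℝ, ConvexOn ℝ Set.univ g ∧ f ≤ g ∧ (∀ i, θ i < ϑ i → g (y i) = f (y i)) ∧
      ∑ i, θ i * g (y i) = m * g x₀ := by
  obtain ⟨a, b, ha, hb, hab⟩ := exists_support_bounds hθ.nonneg (hθ.sum_eq ▸ hm)
  rcases (hab a ha).2.eq_or_lt with rfl | hlt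
  · have hsingle : ∀ φ : ℝ → ℝ, ∑ i, θ i * φ (y i) = θ a * φ (y a) := fun φ =>
      sum_eq_single a (fun i _ hi => by
        rcases (hθ.nonneg i).eq_or_lt with h | h
        · simp [← h]
        · exact absurd (le_antisymm (hab i h).2 (hab i h).1) hi) (by simp)
    have hmass : θ a = m := by simpa [hθ.sum_eq] using (hsingle fun _ => 1).symm
    have hya : y a = x₀ := by
      have := (hsingle id).symm.trans hθ.sum_mul_eq
      rw [hmass] at this
      exact mul_left_cancel₀ hm.ne' this
    exact ⟨f, hf, le_rfl, fun _ _ => rfl, by rw [hsingle, hmass, hya]⟩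
  · set s := slope f (y a) (y b)
    have hyab := hy hlt
    have hIcc : ∀ i, 0 < θ i → y i ∈ Set.Icc (y a) (y b) := fun i h =>
      ⟨hy.monotone (hab i h).1, hy.monotone (hab i h).2⟩
    have hchord : ∀ t ∈ Set.Icc (y a) (y b),
        max (f t) (f (y a) - s * y a + s * t) = f (y a) - s * y a + s * t := fun t ht =>
      max_eq_right (by linarith [hf.le_chord_of_mem_Icc hyab ht])
    refine ⟨fun t => max (f t) (f (y a) - s * y a + s * t), hf.sup (convexOn_affine _ _),
      fun t => le_max_left _ _, fun i hi => max_eq_left ?_, ?_⟩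
    · have : y i ∉ Set.Ioo (y a) (y b) := fun h => hi.ne
        (hθ.saturated a i b (hy.lt_iff_lt.1 h.1) (hy.lt_iff_lt.1 h.2) ha hb)
      linarith [hf.chord_le_of_notMem_Ioo hyab this]
    · beta_reduce
      rw [hchord x₀ (hθ.mem_Icc_of_support hm hIcc), ← hθ.sum_mul_affine]
      refine sum_congr rfl fun i _ => ?_
      rcases (hθ.nonneg i).eq_or_lt with h | h
      · simp [← h]
      · rw [hchord _ (hIcc i h)]

end IsShadow

def ConvexOrderLE {κ ι : Type*} [Fintype κ] [Fintype ι] (x ω : κ → ℝ) (y ϑ : ι → ℝ) : Prop :=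
  ∀ f : ℝ → ℝ, ConvexOn ℝ Set.univ f → ∑ j, ω j * f (x j) ≤ ∑ i, ϑ i * f (y i)

lemma IsShadow.convexOrderLE_sub {ι κ : Type*} [Fintype ι] [LinearOrder ι] [Fintype κ]
    {y ϑ θ : ι → ℝ} {m x₀ : ℝ} {x ω : κ → ℝ} (hy : StrictMono y)
    (hθ : IsShadow y ϑ m x₀ θ) (hm : 0 < m) (hω : ∀ j, 0 ≤ ω j)
    (hcx : ∀ f : ℝ → ℝ, ConvexOn ℝ Set.univ f →
      m * f x₀ + ∑ j, ω j * f (x j) ≤ ∑ i, ϑ i * f (y i)) :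
    ConvexOrderLE x ω y (ϑ - θ) := by
  intro f hf
  obtain ⟨g, hg, hfg, hgf, hgθ⟩ := hθ.exists_convexOn_majorant hy hm hf
  calc ∑ j, ω j * f (x j) ≤ ∑ j, ω j * g (x j) :=
        sum_le_sum fun j _ => mul_le_mul_of_nonneg_left (hfg _) (hω j)
    _ ≤ ∑ i, ϑ i * g (y i) - ∑ i, θ i * g (y i) := by linarith [hcx g hg, hgθ]
    _ = ∑ i, (ϑ - θ) i * g (y i) := by simp only [Pi.sub_apply, sub_mul, sum_sub_distrib]
    _ = ∑ i, (ϑ - θ) i * f (y i) := sum_congr rfl fun i _ => by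
        rcases (hθ.le i).eq_or_lt with h | h
        · simp [h]
        · rw [hgf i h]

section MeanBounds

variable {ι : Type*} [Fintype ι] [LinearOrder ι] {y ϑ θ : ι → ℝ} {m x₀ : ℝ}

lemma sum_mul_le_of_saturated_below (hy : StrictMono y)
    (hdom : ∀ f : ℝ → ℝ, ConvexOn ℝ Set.univ f → (∀ t, 0 ≤ f t) →
      m * f x₀ ≤ ∑ i, ϑ i * f (y i)) (hm : 0 ≤ m) (hθ : ∑ i, θ i = m)
    (b : ι) (hbelow : ∀ i, i < b → θ i = ϑ i) (habove : ∀ i, b < i → θ i = 0) :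
    ∑ i, θ i * y i ≤ m * x₀ := by
  have hput : ∑ i, θ i * (y b - y i) = ∑ i, ϑ i * max (y b - y i) 0 := by
    refine sum_congr rfl fun i _ => ?_
    rcases lt_trichotomy i b with h | rfl | h
    · rw [hbelow i h, max_eq_left (sub_nonneg.2 (hy h).le)]
    · simp
    · rw [habove i h, max_eq_right (sub_nonpos.2 (hy h).le), zero_mul, mul_zero]
  have hexp : ∑ i, θ i * (y b - y i) = m * y b - ∑ i, θ i * y i := by
    simp only [mul_sub, sum_sub_distrib, ← sum_mul, hθ]
  have := hdom _ (convexOn_max_const_sub (y b)) fun t => le_max_right _ _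
  nlinarith [le_max_left (y b - x₀) 0]

lemma le_sum_mul_of_saturated_above (hy : StrictMono y)
    (hdom : ∀ f : ℝ → ℝ, ConvexOn ℝ Set.univ f → (∀ t, 0 ≤ f t) →
      m * f x₀ ≤ ∑ i, ϑ i * f (y i)) (hm : 0 ≤ m) (hθ : ∑ i, θ i = m)
    (a : ι) (hbelow : ∀ i, i < a → θ i = 0) (habove : ∀ i, a < i → θ i = ϑ i) :
    m * x₀ ≤ ∑ i, θ i * y i := by
  have hcall : ∑ i, θ i * (y i - y a) = ∑ i, ϑ i * max (y i - y a) 0 := by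
    refine sum_congr rfl fun i _ => ?_
    rcases lt_trichotomy i a with h | rfl | h
    · rw [hbelow i h, max_eq_right (sub_nonpos.2 (hy h).le), zero_mul, mul_zero]
    · simp
    · rw [habove i h, max_eq_left (sub_nonneg.2 (hy h).le)]
  have hexp : ∑ i, θ i * (y i - y a) = ∑ i, θ i * y i - m * y a := by
    simp only [mul_sub, sum_sub_distrib, ← sum_mul, hθ]
  have := hdom _ (convexOn_max_sub_const (y a)) fun t => le_max_right _ _
  nlinarith [le_max_left (x₀ - y a) 0]

end MeanBounds

section Slicing

variable {M : ℕ} {ϑ : Fin M → ℝ}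

def cumMass (ϑ : Fin M → ℝ) (k : ℕ) : ℝ := ∑ i ∈ univ.filter fun i : Fin M => (i : ℕ) < k, ϑ i

@[simp] lemma cumMass_zero : cumMass ϑ 0 = 0 := by simp [cumMass]

lemma cumMass_of_le {k : ℕ} (hk : M ≤ k) : cumMass ϑ k = ∑ i, ϑ i := by
  rw [cumMass, filter_true_of_mem fun i _ => i.isLt.trans_le hk]

lemma cumMass_succ (i : Fin M) : cumMass ϑ (i + 1) = cumMass ϑ i + ϑ i := by
  have h : ∀ j : Fin M, (if (j : ℕ) < i + 1 then ϑ j else 0)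
      = (if (j : ℕ) < i then ϑ j else 0) + (if i = j then ϑ j else 0) := fun j => by
    rcases lt_trichotomy j i with h | rfl | h
    · simp [h, Nat.lt_succ_of_lt h, h.ne']
    · simp
    · simp [h.ne, not_lt.2 h.le, show ¬ (j : ℕ) < i + 1 by omega]
  simp only [cumMass, sum_filter, h, sum_add_distrib, sum_ite_eq, mem_univ, if_true]

lemma cumMass_mono (hϑ : ∀ i, 0 ≤ ϑ i) : Monotone (cumMass ϑ) := fun _ _ h =>
  sum_le_sum_of_subset_of_nonneg (monotone_filter_right _ fun _ _ hi => hi.trans_le h)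
    fun i _ _ => hϑ i

variable (ϑ) in
/-- The part of `ϑ` lying between the quantile levels `s` and `s + m`. -/
def quantileSlice (m s : ℝ) (i : Fin M) : ℝ :=
  max s (min (s + m) (cumMass ϑ (i + 1))) - max s (min (s + m) (cumMass ϑ i))

variable {m s : ℝ}

lemma quantileSlice_nonneg (hϑ : ∀ i, 0 ≤ ϑ i) (i : Fin M) : 0 ≤ quantileSlice ϑ m s i :=
  sub_nonneg.2 (max_le_max le_rfl (min_le_min le_rfl (cumMass_mono hϑ (Nat.le_succ _))))

lemma quantileSlice_le (hϑ : ∀ i, 0 ≤ ϑ i) (i : Fin M) : quantileSlice ϑ m s i ≤ ϑ i := by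
  have hstep := cumMass_succ (ϑ := ϑ) i
  have hmono := cumMass_mono hϑ (Nat.le_succ i)
  simp only [quantileSlice, max_def, min_def]
  split_ifs <;> linarith

lemma quantileSlice_eq (hϑ : ∀ i, 0 ≤ ϑ i) {i : Fin M} (hs : s ≤ cumMass ϑ i)
    (hsm : cumMass ϑ (i + 1) ≤ s + m) : quantileSlice ϑ m s i = ϑ i := by
  have hmono := cumMass_mono hϑ (Nat.le_succ i)
  rw [quantileSlice, min_eq_right hsm, max_eq_right (hs.trans hmono),
    min_eq_right (hmono.trans hsm), max_eq_right hs, cumMass_succ, add_sub_cancel_left]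

lemma lt_of_quantileSlice_pos (hϑ : ∀ i, 0 ≤ ϑ i) (hm : 0 ≤ m) {i : Fin M}
    (h : 0 < quantileSlice ϑ m s i) :
    s < cumMass ϑ (i + 1) ∧ cumMass ϑ i < s + m := by
  have hmono := cumMass_mono hϑ (Nat.le_succ i)
  simp only [quantileSlice, max_def, min_def] at h
  constructor <;> by_contra! h' <;> split_ifs at h <;> linarith

lemma sum_quantileSlice (hm : 0 ≤ m) (hs : 0 ≤ s) (hsW : s + m ≤ ∑ i, ϑ i) :
    ∑ i, quantileSlice ϑ m s i = m := by
  set clamp : ℕ → ℝ := fun k => max s (min (s + m) (cumMass ϑ k))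
  have h : ∑ i, quantileSlice ϑ m s i = ∑ k ∈ range M, (clamp (k + 1) - clamp k) :=
    Fin.sum_univ_eq_sum_range (fun k => clamp (k + 1) - clamp k) M
  rw [h, sum_range_sub]
  simp only [clamp]
  rw [cumMass_zero, cumMass_of_le le_rfl, min_eq_left hsW,
    max_eq_right (by linarith), min_eq_right (by linarith), max_eq_left hs]
  ring

lemma continuous_sum_quantileSlice_mul (y : Fin M → ℝ) :
    Continuous fun s => ∑ i, quantileSlice ϑ m s i * y i := by
  unfold quantileSlice
  fun_prop

lemma quantileSlice_saturated (hϑ : ∀ i, 0 ≤ ϑ i) (hm : 0 ≤ m) {i k l : Fin M} (hik : i < k)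
    (hkl : k < l) (hi : 0 < quantileSlice ϑ m s i) (hl : 0 < quantileSlice ϑ m s l) :
    quantileSlice ϑ m s k = ϑ k :=
  quantileSlice_eq hϑ ((lt_of_quantileSlice_pos hϑ hm hi).1.le.trans (cumMass_mono hϑ hik))
    ((cumMass_mono hϑ hkl).trans (lt_of_quantileSlice_pos hϑ hm hl).2.le)

lemma quantileSlice_zero_eq_of_lt (hϑ : ∀ i, 0 ≤ ϑ i) (hm : 0 ≤ m) {b i : Fin M}
    (hb : 0 < quantileSlice ϑ m 0 b) (hib : i < b) : quantileSlice ϑ m 0 i = ϑ i :=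
  quantileSlice_eq hϑ (cumMass_zero (ϑ := ϑ) ▸ cumMass_mono hϑ (Nat.zero_le _))
    ((cumMass_mono hϑ hib).trans (lt_of_quantileSlice_pos hϑ hm hb).2.le)

lemma quantileSlice_top_eq_of_lt (hϑ : ∀ i, 0 ≤ ϑ i) (hm : 0 ≤ m) {a i : Fin M}
    (ha : 0 < quantileSlice ϑ m (∑ i, ϑ i - m) a) (hai : a < i) :
    quantileSlice ϑ m (∑ i, ϑ i - m) i = ϑ i :=
  quantileSlice_eq hϑ ((lt_of_quantileSlice_pos hϑ hm ha).1.le.trans (cumMass_mono hϑ hai))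
    (by rw [sub_add_cancel, ← cumMass_of_le (ϑ := ϑ) le_rfl]; exact cumMass_mono hϑ i.isLt)

lemma exists_isShadow {y : Fin M → ℝ} {x₀ : ℝ} (hy : StrictMono y) (hϑ : ∀ i, 0 ≤ ϑ i)
    (hm : 0 < m)
    (hdom : ∀ f : ℝ → ℝ, ConvexOn ℝ Set.univ f → (∀ t, 0 ≤ f t) →
      m * f x₀ ≤ ∑ i, ϑ i * f (y i)) :
    ∃ θ, IsShadow y ϑ m x₀ θ := by
  set W := ∑ i, ϑ i
  have hmW : m ≤ W := by
    simpa using hdom (fun _ => 1) (convexOn_const 1 convex_univ) fun _ => zero_le_one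
  have hsum : ∀ s ∈ Set.Icc 0 (W - m), ∑ i, quantileSlice ϑ m s i = m := fun s hs =>
    sum_quantileSlice hm.le hs.1 (by linarith [hs.2])
  have hlow : ∑ i, quantileSlice ϑ m 0 i * y i ≤ m * x₀ := by
    have h0 := hsum 0 ⟨le_rfl, by linarith⟩
    obtain ⟨_, b, -, hb, hsupp⟩ :=
      exists_support_bounds (quantileSlice_nonneg hϑ) (h0.symm ▸ hm)
    refine sum_mul_le_of_saturated_below hy hdom hm.le h0 b
      (fun i hi => quantileSlice_zero_eq_of_lt hϑ hm.le hb hi) fun i hi => ?_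
    exact le_antisymm (not_lt.1 fun h => (hsupp i h).2.not_gt hi) (quantileSlice_nonneg hϑ i)
  have hhigh : m * x₀ ≤ ∑ i, quantileSlice ϑ m (W - m) i * y i := by
    have h1 := hsum (W - m) ⟨by linarith, le_rfl⟩
    obtain ⟨a, _, ha, -, hsupp⟩ :=
      exists_support_bounds (quantileSlice_nonneg hϑ) (h1.symm ▸ hm)
    refine le_sum_mul_of_saturated_above hy hdom hm.le h1 a (fun i hi => ?_)
      fun i hi => quantileSlice_top_eq_of_lt hϑ hm.le ha hi
    exact le_antisymm (not_lt.1 fun h => (hsupp i h).1.not_gt hi) (quantileSlice_nonneg hϑ i)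
  obtain ⟨s, hs, hmean⟩ := intermediate_value_Icc (by linarith : (0 : ℝ) ≤ W - m)
    (continuous_sum_quantileSlice_mul y).continuousOn ⟨hlow, hhigh⟩
  exact ⟨_, quantileSlice_nonneg hϑ, quantileSlice_le hϑ, hsum s hs, hmean,
    fun i k l hik hkl hi hl => quantileSlice_saturated hϑ hm.le hik hkl hi hl⟩

end Slicing

section Couplings

variable {N M : ℕ}

def IsMartingaleCoupling (x : Fin N → ℝ) (y : Fin M → ℝ) (ω : Fin N → ℝ) (ϑ : Fin M → ℝ)
    (q : Fin N → Fin M → ℝ) : Prop :=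
  (∀ j i, 0 ≤ q j i) ∧ (∀ j, ∑ i, q j i = ω j) ∧ (∀ i, ∑ j, q j i = ϑ i) ∧
    (∀ j, ∑ i, q j i * (y i - x j) = 0)

def IsLeftMonotone (x : Fin N → ℝ) (y : Fin M → ℝ) (q : Fin N → Fin M → ℝ) : Prop :=
  ∀ j j' : Fin N, ∀ im i' ip : Fin M, x j < x j' → y im < y i' → y i' < y ip →
    0 < q j im → 0 < q j ip → ¬ 0 < q j' i'

variable {y : Fin M → ℝ} {ϑ θ : Fin M → ℝ}

namespace IsMartingaleCoupling

variable {x ω : Fin N → ℝ} {q : Fin N → Fin M → ℝ}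

lemma le_col (hq : IsMartingaleCoupling x y ω ϑ q) (j : Fin N) (i : Fin M) : q j i ≤ ϑ i :=
  hq.2.2.1 i ▸ single_le_sum (fun j _ => hq.1 j i) (mem_univ j)

lemma eq_zero_of_col_eq_zero (hq : IsMartingaleCoupling x y ω ϑ q) {i : Fin M} (hi : ϑ i = 0)
    (j : Fin N) : q j i = 0 :=
  le_antisymm (hi ▸ hq.le_col j i) (hq.1 j i)

lemma sum_mul_eq (hq : IsMartingaleCoupling x y ω ϑ q) (j : Fin N) :
    ∑ i, q j i * y i = ω j * x j := by
  have h := hq.2.2.2 j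
  simp only [mul_sub, sum_sub_distrib, ← sum_mul, hq.2.1 j] at h
  linarith

lemma tail {x ω : Fin (N + 1) → ℝ} {q : Fin (N + 1) → Fin M → ℝ}
    (hq : IsMartingaleCoupling x y ω ϑ q) :
    IsMartingaleCoupling (Fin.tail x) y (Fin.tail ω) (ϑ - q 0) (Fin.tail q) :=
  ⟨fun j => hq.1 j.succ, fun j => hq.2.1 j.succ,
    fun i => by simp [Fin.tail, ← hq.2.2.1 i, Fin.sum_univ_succ], fun j => hq.2.2.2 j.succ⟩

lemma cons {x ω : Fin (N + 1) → ℝ} (hθ : IsShadow y ϑ (ω 0) (x 0) θ)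
    (hq : IsMartingaleCoupling (Fin.tail x) y (Fin.tail ω) (ϑ - θ) q) :
    IsMartingaleCoupling x y ω ϑ (Fin.cons θ q) := by
  obtain ⟨h0, hrow, hcol, hmart⟩ := hq
  refine ⟨fun j => ?_, fun j => ?_, fun i => ?_, fun j => ?_⟩
  · cases j using Fin.cases with
    | zero => exact hθ.nonneg
    | succ j => exact h0 j
  · cases j using Fin.cases with
    | zero => exact hθ.sum_eq
    | succ j => exact hrow j
  · simp [Fin.sum_univ_succ, hcol]
  · cases j using Fin.cases with
    | zero =>
      rw [Fin.cons_zero]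
      simp only [mul_sub, sum_sub_distrib, ← sum_mul, hθ.sum_mul_eq, hθ.sum_eq]
      ring
    | succ j => exact hmart j

end IsMartingaleCoupling

namespace IsLeftMonotone

variable {x ω : Fin (N + 1) → ℝ}

lemma tail {q : Fin (N + 1) → Fin M → ℝ} (hlm : IsLeftMonotone x y q) :
    IsLeftMonotone (Fin.tail x) y (Fin.tail q) :=
  fun j j' => hlm j.succ j'.succ

lemma isShadow_head {q : Fin (N + 1) → Fin M → ℝ} (hx : StrictMono x) (hy : StrictMono y)
    (hq : IsMartingaleCoupling x y ω ϑ q) (hlm : IsLeftMonotone x y q) :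
    IsShadow y ϑ (ω 0) (x 0) (q 0) where
  nonneg := hq.1 0
  le := hq.le_col 0
  sum_eq := hq.2.1 0
  sum_mul_eq := hq.sum_mul_eq 0
  saturated i k l hik hkl hi hl := by
    have hzero : ∀ j : Fin N, q j.succ k = 0 := fun j => le_antisymm
      (not_lt.1 (hlm 0 j.succ i k l (hx j.succ_pos) (hy hik) (hy hkl) hi hl)) (hq.1 _ _)
    rw [← hq.2.2.1 k, Fin.sum_univ_succ]
    simp [hzero]

lemma cons {q : Fin N → Fin M → ℝ} (hx : StrictMono x) (hy : StrictMono y)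
    (hθ : IsShadow y ϑ (ω 0) (x 0) θ)
    (hq : IsMartingaleCoupling (Fin.tail x) y (Fin.tail ω) (ϑ - θ) q)
    (hlm : IsLeftMonotone (Fin.tail x) y q) : IsLeftMonotone x y (Fin.cons θ q) := by
  intro j j' im i' ip hxx hy₁ hy₂ hp₁ hp₂
  cases j using Fin.cases with
  | zero =>
    cases j' using Fin.cases with
    | zero => exact absurd hxx (lt_irrefl _)
    | succ j' =>
      have hsat := hθ.saturated im i' ip (hy.lt_iff_lt.1 hy₁) (hy.lt_iff_lt.1 hy₂) hp₁ hp₂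
      have hcol : (ϑ - θ) i' = 0 := by simp [hsat]
      simp [hq.eq_zero_of_col_eq_zero hcol j']
  | succ j =>
    cases j' using Fin.cases with
    | zero => exact absurd hxx (not_lt.2 (hx.monotone (Fin.zero_le _)))
    | succ j' => exact hlm j j' im i' ip hxx hy₁ hy₂ hp₁ hp₂

end IsLeftMonotone

theorem existsUnique_isLeftMonotone_isMartingaleCoupling (hy : StrictMono y) :
    ∀ {N : ℕ} (x ω : Fin N → ℝ) (ϑ : Fin M → ℝ), StrictMono x → (∀ j, 0 < ω j) →
      (∀ i, 0 ≤ ϑ i) → ConvexOrderLE x ω y ϑ →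
      ∃! q, IsMartingaleCoupling x y ω ϑ q ∧ IsLeftMonotone x y q
  | 0, x, ω, ϑ, _, _, hϑ, hcx => by
    have hsum : ∑ i, ϑ i ≤ 0 := by simpa using hcx (fun _ => -1) (convexOn_const _ convex_univ)
    have hϑ0 := (sum_eq_zero_iff_of_nonneg fun i _ => hϑ i).1
      (le_antisymm hsum (sum_nonneg fun i _ => hϑ i))
    exact ⟨finZeroElim, ⟨⟨finZeroElim, finZeroElim, fun i => by simp [hϑ0 i], finZeroElim⟩,
      finZeroElim⟩, fun q _ => funext finZeroElim⟩
  | N + 1, x, ω, ϑ, hx, hω, hϑ, hcx => by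
    obtain ⟨θ, hθ⟩ := exists_isShadow hy hϑ (hω 0) fun f hf hf₀ =>
      (single_le_sum (fun j _ => mul_nonneg (hω j).le (hf₀ _)) (mem_univ 0)).trans (hcx f hf)
    have hcx' : ConvexOrderLE (Fin.tail x) (Fin.tail ω) y (ϑ - θ) :=
      hθ.convexOrderLE_sub hy (hω 0) (fun j => (hω _).le) fun f hf => by
        simpa [Fin.sum_univ_succ, Fin.tail] using hcx f hf
    obtain ⟨q, ⟨hq, hlm⟩, huniq⟩ := existsUnique_isLeftMonotone_isMartingaleCoupling hy
      (Fin.tail x) (Fin.tail ω) (ϑ - θ) (hx.comp (Fin.strictMono_succ)) (fun j => hω _)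
      (fun i => sub_nonneg.2 (hθ.le i)) hcx'
    refine ⟨Fin.cons θ q, ⟨hq.cons hθ, hlm.cons hx hy hθ hq⟩, fun q' ⟨hq', hlm'⟩ => ?_⟩
    have h0 : q' 0 = θ := (hlm'.isShadow_head hx hy hq').unique hy hθ
    have htail : Fin.tail q' = q := huniq _ ⟨h0 ▸ hq'.tail, hlm'.tail⟩
    rw [← Fin.cons_self_tail q', h0, htail]

end Couplings

theorem stmt13_general (N M : ℕ) (x : Fin N → ℝ) (y : Fin M → ℝ) (ω : Fin N → ℝ) (ϑ : Fin M → ℝ)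
    (hx : StrictMono x) (hy : StrictMono y)
    (hω : ∀ j, 0 < ω j) (hϑ : ∀ i, 0 < ϑ i)
    (hcx : ∀ f : ℝ → ℝ, ConvexOn ℝ Set.univ f →
        ∑ j, ω j * f (x j) ≤ ∑ i, ϑ i * f (y i)) :
    ∃! q : Fin N → Fin M → ℝ,
      ((∀ j i, 0 ≤ q j i) ∧ (∀ j, ∑ i, q j i = ω j) ∧ (∀ i, ∑ j, q j i = ϑ i) ∧
        (∀ j, ∑ i, q j i * (y i - x j) = 0)) ∧
      (∀ j j' : Fin N, ∀ im i' ip : Fin M, x j < x j' → y im < y i' → y i' < y ip →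
        0 < q j im → 0 < q j ip → ¬ 0 < q j' i') :=
  existsUnique_isLeftMonotone_isMartingaleCoupling hy x ω ϑ hx hω (fun i => (hϑ i).le) hcx

/-- For finitely supported probability measures `μ ≤_c ν` on `ℝ`, there exists exactly one
left-monotone martingale transport plan. -/
theorem stmt13 (N M : ℕ) (x : Fin N → ℝ) (y : Fin M → ℝ) (ω : Fin N → ℝ) (ϑ : Fin M → ℝ)
    (hx : StrictMono x) (hy : StrictMono y)
    (hω : ∀ j, 0 < ω j) (hϑ : ∀ i, 0 < ϑ i)
    (hω1 : ∑ j, ω j = 1) (hϑ1 : ∑ i, ϑ i = 1)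
    (hcx : ∀ f : ℝ → ℝ, ConvexOn ℝ Set.univ f →
        ∑ j, ω j * f (x j) ≤ ∑ i, ϑ i * f (y i)) :
    ∃! q : Fin N → Fin M → ℝ,
      ((∀ j i, 0 ≤ q j i) ∧ (∀ j, ∑ i, q j i = ω j) ∧ (∀ i, ∑ j, q j i = ϑ i) ∧
        (∀ j, ∑ i, q j i * (y i - x j) = 0)) ∧
      (∀ j j' : Fin N, ∀ im i' ip : Fin M, x j < x j' → y im < y i' → y i' < y ip →
        0 < q j im → 0 < q j ip → ¬ 0 < q j' i') :=
  stmt13_general N M x y ω ϑ hx hy hω hϑ hcx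
end

section
/- Let μ ≤_c ν be discrete probability measures with smallest μ-atom x₁ of mass ω₁, with y_ℓ < x₁ < y_{ℓ+1} consecutive ν-atoms, and let ϑ'_ℓ, ϑ'_{ℓ+1} solve ϑ'_ℓ + ϑ'_{ℓ+1} = ω₁, ϑ'_ℓ y_ℓ + ϑ'_{ℓ+1} y_{ℓ+1} = ω₁ x₁. If ϑ'_ℓ ≤ ν({y_ℓ}) and ϑ'_{ℓ+1} ≤ ν({y_{ℓ+1}}), then the residual measures μ̃ = μ − ω₁δ_{x₁} and ν̃ = ν − ϑ'_ℓ δ_{y_ℓ} − ϑ'_{ℓ+1} δ_{y_{ℓ+1}} satisfy μ̃ ≤_c ν̃. -/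
/-!
Let `a < b` be the two `ν`-atoms around `x₁` and let `c` be the chord of `f` over `[a, b]`.
Then `g = max f c` is convex, coincides with `f` at every atom of `ν` (none lies strictly
between `a` and `b`), dominates `f` everywhere, and equals `c` at `x₁`. Since the split
`ϑ'_ℓ δ_a + ϑ'_{ℓ+1} δ_b` has the mass and barycentre of `ω₁ δ_{x₁}`, the affine function `c`
gives `ω₁ c(x₁) = ϑ'_ℓ f(a) + ϑ'_{ℓ+1} f(b)`; testing `μ ≤_c ν` against `g` gives the claim.
-/

open Finset

variable {𝕜 : Type*} [Field 𝕜] [LinearOrder 𝕜] [IsStrictOrderedRing 𝕜]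

def chord (f : 𝕜 → 𝕜) (a b t : 𝕜) : 𝕜 := f a + slope f a b * (t - a)

theorem convexOn_chord (f : 𝕜 → 𝕜) (a b : 𝕜) : ConvexOn 𝕜 Set.univ (chord f a b) := by
  refine ⟨convex_univ, fun u _ v _ p q _ _ hpq => le_of_eq ?_⟩
  simp only [chord, smul_eq_mul]
  linear_combination (slope f a b * a - f a) * hpq

theorem mul_chord_eq_of_barycenter (f : 𝕜 → 𝕜) {a b t w p q : 𝕜} (hab : a ≠ b)
    (hmass : p + q = w) (hmean : p * a + q * b = w * t) :
    w * chord f a b t = p * f a + q * f b := by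
  have hslope : slope f a b * (b - a) = f b - f a := by
    rw [slope_def_field, div_mul_cancel₀ _ (sub_ne_zero.2 hab.symm)]
  simp only [chord]
  linear_combination -slope f a b * hmean - (f a - slope f a b * a) * hmass + q * hslope

section ConvexOn

variable {s : Set 𝕜} {f : 𝕜 → 𝕜} {a b t : 𝕜}

theorem ConvexOn.le_chord (hf : ConvexOn 𝕜 s f) (ha : a ∈ s) (hb : b ∈ s) (ht : t ∈ s)
    (hat : a ≤ t) (htb : t ≤ b) : f t ≤ chord f a b t := by
  rcases hat.eq_or_lt with rfl | hat
  · simp [chord]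
  have h := hf.secant_mono ha ht hb hat.ne' (hat.trans_le htb).ne' htb
  rw [← slope_def_field f a b, div_le_iff₀ (sub_pos.2 hat)] at h
  rw [chord]
  linarith

theorem ConvexOn.chord_le (hf : ConvexOn 𝕜 s f) (ha : a ∈ s) (hb : b ∈ s) (ht : t ∈ s)
    (hab : a < b) (ht' : t ∉ Set.Ioo a b) : chord f a b t ≤ f t := by
  rw [Set.mem_Ioo, not_and_or, not_lt, not_lt] at ht'
  rcases ht' with hta | hbt
  · rcases hta.eq_or_lt with rfl | hta
    · simp [chord]
    have h := hf.secant_mono ha ht hb hta.ne hab.ne' (hta.trans hab).le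
    rw [← slope_def_field f a b, div_le_iff_of_neg (sub_neg.2 hta)] at h
    rw [chord]
    linarith
  · have hat := hab.trans_le hbt
    have h := hf.secant_mono ha hb ht hab.ne' hat.ne' hbt
    rw [← slope_def_field f a b, le_div_iff₀ (sub_pos.2 hat)] at h
    rw [chord]
    linarith

end ConvexOn

theorem StrictMono.apply_notMem_Ioo_of_covBy {α β : Type*} [LinearOrder α] [Preorder β]
    {y : α → β} (hy : StrictMono y) {k k' : α} (hk : k ⋖ k') (i : α) :
    y i ∉ Set.Ioo (y k) (y k') := fun ⟨hki, hik'⟩ =>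
  hk.2 (hy.lt_iff_lt.1 hki) (hy.lt_iff_lt.1 hik')

theorem stmt15_general (N M : ℕ) (x : Fin (N + 1) → ℝ) (y : Fin M → ℝ)
    (ω : Fin (N + 1) → ℝ) (ϑ : Fin M → ℝ)
    (hy : StrictMono y)
    (hω : ∀ j, 0 < ω j)
    (hcx : ∀ f : ℝ → ℝ, ConvexOn ℝ Set.univ f →
        ∑ j, ω j * f (x j) ≤ ∑ i, ϑ i * f (y i))
    (ℓ : ℕ) (h1 : ℓ < M) (h2 : ℓ + 1 < M)
    (hlow : y ⟨ℓ, h1⟩ < x 0) (hhigh : x 0 < y ⟨ℓ + 1, h2⟩)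
    (ϑl ϑr : ℝ)
    (heq1 : ϑl + ϑr = ω 0)
    (heq2 : ϑl * y ⟨ℓ, h1⟩ + ϑr * y ⟨ℓ + 1, h2⟩ = ω 0 * x 0) :
    ∀ f : ℝ → ℝ, ConvexOn ℝ Set.univ f →
      ∑ j ∈ Finset.univ.erase 0, ω j * f (x j) ≤
        (∑ i, ϑ i * f (y i)) - ϑl * f (y ⟨ℓ, h1⟩) - ϑr * f (y ⟨ℓ + 1, h2⟩) := by
  intro f hf
  have hcov : (⟨ℓ, h1⟩ : Fin M) ⋖ ⟨ℓ + 1, h2⟩ := by simp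
  set a := y ⟨ℓ, h1⟩
  set b := y ⟨ℓ + 1, h2⟩
  have hab : a < b := hy hcov.lt
  set g := f ⊔ chord f a b
  have hg : ConvexOn ℝ Set.univ g := hf.sup (convexOn_chord f a b)
  have hgy (i : Fin M) : g (y i) = f (y i) := sup_eq_left.2 <|
    hf.chord_le trivial trivial trivial hab (hy.apply_notMem_Ioo_of_covBy hcov i)
  have hgx : g (x 0) = chord f a b (x 0) := sup_eq_right.2 <|
    hf.le_chord trivial trivial trivial hlow.le hhigh.le
  calc ∑ j ∈ univ.erase 0, ω j * f (x j)
      ≤ ∑ j ∈ univ.erase 0, ω j * g (x j) :=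
        sum_le_sum fun j _ => mul_le_mul_of_nonneg_left le_sup_left (hω j).le
    _ = ∑ j, ω j * g (x j) - ω 0 * chord f a b (x 0) := by
        rw [← hgx, ← sum_erase_add _ _ (mem_univ 0), add_sub_cancel_right]
    _ ≤ ∑ i, ϑ i * g (y i) - ω 0 * chord f a b (x 0) := by gcongr; exact hcx g hg
    _ = (∑ i, ϑ i * f (y i)) - ϑl * f a - ϑr * f b := by
        rw [mul_chord_eq_of_barycenter f hab.ne heq1 heq2]
        simp only [hgy]
        ring

/-- One step of the left-monotone construction (Case II, Case 1) preserves convex order: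
removing the smallest atom `x₁` of `μ` and the corresponding martingale split
`ϑ'_ℓ δ_{y_ℓ} + ϑ'_{ℓ+1} δ_{y_{ℓ+1}}` from `ν` leaves measures in convex order. -/
theorem stmt15 (N M : ℕ) (x : Fin (N + 1) → ℝ) (y : Fin M → ℝ)
    (ω : Fin (N + 1) → ℝ) (ϑ : Fin M → ℝ)
    (hx : StrictMono x) (hy : StrictMono y)
    (hω : ∀ j, 0 < ω j) (hϑ : ∀ i, 0 < ϑ i)
    (hω1 : ∑ j, ω j = 1) (hϑ1 : ∑ i, ϑ i = 1)
    (hcx : ∀ f : ℝ → ℝ, ConvexOn ℝ Set.univ f →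
        ∑ j, ω j * f (x j) ≤ ∑ i, ϑ i * f (y i))
    (ℓ : ℕ) (h1 : ℓ < M) (h2 : ℓ + 1 < M)
    (hlow : y ⟨ℓ, h1⟩ < x 0) (hhigh : x 0 < y ⟨ℓ + 1, h2⟩)
    (ϑl ϑr : ℝ)
    (heq1 : ϑl + ϑr = ω 0)
    (heq2 : ϑl * y ⟨ℓ, h1⟩ + ϑr * y ⟨ℓ + 1, h2⟩ = ω 0 * x 0)
    (hle1 : ϑl ≤ ϑ ⟨ℓ, h1⟩) (hle2 : ϑr ≤ ϑ ⟨ℓ + 1, h2⟩) :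
    ∀ f : ℝ → ℝ, ConvexOn ℝ Set.univ f →
      ∑ j ∈ Finset.univ.erase 0, ω j * f (x j) ≤
        (∑ i, ϑ i * f (y i)) - ϑl * f (y ⟨ℓ, h1⟩) - ϑr * f (y ⟨ℓ + 1, h2⟩) :=
  stmt15_general N M x y ω ϑ hy hω hcx ℓ h1 h2 hlow hhigh ϑl ϑr heq1 heq2
end
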